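/- The Heisenberg inversion R(ζ,v) = (ζ·(-‖ζ‖²+iv)⁻¹, -v·|−‖ζ‖²+iv|⁻²) on ℂ × ℝ minus the origin satisfies d(R(p),R(q)) = d(p,q)/(d(p,0)·d(0,q)) for all p, q ≠ 0, where d is the Korányi–Cygan metric and 0 = (0,0). -/

import Mathlib

/-- The Korányi–Cygan gauge on the first Heisenberg group `ℂ × ℝ`. -/
noncomputable def heisGauge (p : ℂ × ℝ) : ℝ :=
  (‖p.1‖ ^ 4 + p.2 ^ 2) ^ ((1 : ℝ) / 4)

/-- The Heisenberg group law `(ζ,v)*(ζ',v') = (ζ+ζ', v+v'+2Im(ζ̄'ζ))` on `ℂ × ℝ`. -/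
noncomputable def heisMul (p q : ℂ × ℝ) : ℂ × ℝ :=
  (p.1 + q.1, p.2 + q.2 + 2 * ((starRingEnd ℂ) q.1 * p.1).im)

/-- Inversion in the Heisenberg group. -/
def heisInv (p : ℂ × ℝ) : ℂ × ℝ := (-p.1, -p.2)

/-- The Korányi–Cygan metric `d(p,q) = |p⁻¹ * q|`. -/
noncomputable def heisDist (p q : ℂ × ℝ) : ℝ :=
  heisGauge (heisMul (heisInv p) q)

/-- The Heisenberg inversion `R`. -/
noncomputable def heisR (p : ℂ × ℝ) : ℂ × ℝ :=
  (p.1 * (((-‖p.1‖ ^ 2 : ℝ) : ℂ) + (p.2 : ℂ) * Complex.I)⁻¹,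
    -p.2 * (‖((-‖p.1‖ ^ 2 : ℝ) : ℂ) + (p.2 : ℂ) * Complex.I‖)⁻¹ ^ 2)

/-!
Encode `(ζ, v)` by the complex number `w(ζ, v) = -|ζ|² + iv`. Then the gauge is `|g| = √|w(g)|`,
and the group law reads `w(p⁻¹ * q) = ⟨p, q⟩ := conj (w p) + w q + 2 conj ζ_p ζ_q`. The inversion
acts by `w ↦ w⁻¹`, `ζ ↦ ζ / w`, so the pairing `⟨p, q⟩` gets divided by `conj (w p) * w q`.
Taking square roots of absolute values gives the claim, since `d(p, 0) = √|w p|` and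
`d(0, q) = √|w q|`.
-/

open ComplexConjugate

noncomputable def heisW (p : ℂ × ℝ) : ℂ :=
  ((-‖p.1‖ ^ 2 : ℝ) : ℂ) + (p.2 : ℂ) * Complex.I

@[simp]
lemma heisW_re (p : ℂ × ℝ) : (heisW p).re = -‖p.1‖ ^ 2 := by
  simp [heisW, -Complex.ofReal_pow]

@[simp]
lemma heisW_im (p : ℂ × ℝ) : (heisW p).im = p.2 := by
  simp [heisW, -Complex.ofReal_pow]

lemma heisW_eq_zero {p : ℂ × ℝ} : heisW p = 0 ↔ p = 0 := by
  refine ⟨fun h => ?_, fun h => by simp [h, heisW]⟩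
  have hre := congrArg Complex.re h
  have him := congrArg Complex.im h
  simp only [heisW_re, heisW_im, Complex.zero_re, Complex.zero_im, neg_eq_zero,
    pow_eq_zero_iff two_ne_zero, norm_eq_zero] at hre him
  exact Prod.ext hre him

lemma heisGauge_eq_sqrt_norm_heisW (p : ℂ × ℝ) : heisGauge p = √‖heisW p‖ := by
  rw [heisGauge, Complex.norm_eq_sqrt_sq_add_sq (heisW p), heisW_re, heisW_im, Real.sqrt_eq_rpow,
    Real.sqrt_eq_rpow, ← Real.rpow_mul (by positivity)]
  norm_num
  ring_nf

noncomputable def heisPairing (p q : ℂ × ℝ) : ℂ :=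
  conj (heisW p) + heisW q + 2 * conj p.1 * q.1

lemma heisW_heisMul_heisInv (p q : ℂ × ℝ) :
    heisW (heisMul (heisInv p) q) = heisPairing p q := by
  apply Complex.ext
  · simp only [heisPairing, heisMul, heisInv, heisW_re, Complex.add_re, Complex.conj_re,
      Complex.mul_re, Complex.conj_im, ← Complex.normSq_eq_norm_sq, Complex.normSq_apply]
    norm_num
    ring
  · simp only [heisPairing, heisMul, heisInv, heisW_im, Complex.add_im, Complex.conj_im,
      Complex.mul_im, Complex.mul_re, Complex.neg_re, Complex.neg_im, Complex.conj_re]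
    norm_num
    ring

lemma heisDist_eq_sqrt_norm_heisPairing (p q : ℂ × ℝ) : heisDist p q = √‖heisPairing p q‖ := by
  rw [heisDist, heisGauge_eq_sqrt_norm_heisW, heisW_heisMul_heisInv]

lemma heisDist_zero_right (p : ℂ × ℝ) : heisDist p 0 = √‖heisW p‖ := by
  simp [heisDist_eq_sqrt_norm_heisPairing, heisPairing, heisW_eq_zero.mpr rfl]

lemma heisDist_zero_left (q : ℂ × ℝ) : heisDist 0 q = √‖heisW q‖ := by
  simp [heisDist_eq_sqrt_norm_heisPairing, heisPairing, heisW_eq_zero.mpr rfl]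

lemma heisR_fst (p : ℂ × ℝ) : (heisR p).1 = p.1 * (heisW p)⁻¹ := rfl

lemma heisW_heisR (p : ℂ × ℝ) : heisW (heisR p) = (heisW p)⁻¹ := by
  have hζ : ‖p.1‖ ^ 2 = Complex.normSq p.1 := (Complex.normSq_eq_norm_sq _).symm
  apply Complex.ext
  · rw [heisW_re, heisR_fst, Complex.inv_re, heisW_re, norm_mul, norm_inv, mul_pow, inv_pow,
      ← Complex.normSq_eq_norm_sq (heisW p), hζ]
    ring
  · rw [heisW_im, Complex.inv_im, heisW_im, heisR, Complex.normSq_eq_norm_sq]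
    simp [heisW, div_eq_mul_inv]

lemma heisPairing_heisR {p q : ℂ × ℝ} (hp : p ≠ 0) (hq : q ≠ 0) :
    heisPairing (heisR p) (heisR q) = heisPairing p q / (conj (heisW p) * heisW q) := by
  have hwp : conj (heisW p) ≠ 0 := by simpa [heisW_eq_zero] using hp
  have hwq : heisW q ≠ 0 := by simpa [heisW_eq_zero] using hq
  rw [heisPairing, heisPairing, heisW_heisR, heisW_heisR, heisR_fst, heisR_fst, map_mul,
    map_inv₀]
  field_simp
  ring

theorem stmt_7 (p q : ℂ × ℝ) (hp : p ≠ 0) (hq : q ≠ 0) :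
    heisDist (heisR p) (heisR q) = heisDist p q / (heisDist p 0 * heisDist 0 q) := by
  rw [heisDist_eq_sqrt_norm_heisPairing, heisPairing_heisR hp hq,
    heisDist_eq_sqrt_norm_heisPairing, heisDist_zero_right, heisDist_zero_left, norm_div,
    norm_mul, Complex.norm_conj, Real.sqrt_div' _ (by positivity), Real.sqrt_mul (norm_nonneg _)]
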